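/- arXiv:1111.1802 — 2 statements merged into one kernel-verified Lean document; each statement's English description precedes it below -/
import Mathlib

section
/- For fixed real numbers a and b, the ratio of gamma functions satisfies Γ(x+a)/Γ(x+b) ~ x^{a-b} as x → ∞; i.e., lim_{x→∞} (Γ(x+a)/Γ(x+b))/x^{a-b} = 1. -/
open Filter Real

/-- log-convexity inequality for Gamma. -/
lemma gamma_logconvex {y z t : ℝ} (hy : 0 < y) (hz : 0 < z) (ht0 : 0 ≤ t) (ht1 : t ≤ 1) :
    Real.Gamma ((1 - t) * y + t * z) ≤ Real.Gamma y ^ (1 - t) * Real.Gamma z ^ t := by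
  have hw : 0 < (1 - t) * y + t * z := by
    rcases eq_or_lt_of_le ht0 with h | h
    · simp [← h, hy]
    · exact add_pos_of_nonneg_of_pos (mul_nonneg (by linarith) hy.le) (mul_pos h hz)
  have h := Real.convexOn_log_Gamma.2 (Set.mem_Ioi.2 hy) (Set.mem_Ioi.2 hz)
      (by linarith : (0:ℝ) ≤ 1 - t) ht0 (by ring)
  simp only [smul_eq_mul, Function.comp_apply] at h
  have := Real.exp_le_exp.2 h
  rw [mul_comm (1-t) (Real.log _), mul_comm t (Real.log _)] at this
  rwa [Real.exp_log (Real.Gamma_pos_of_pos hw), Real.exp_add,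
    ← Real.rpow_def_of_pos (Real.Gamma_pos_of_pos hy) (1 - t),
    ← Real.rpow_def_of_pos (Real.Gamma_pos_of_pos hz) t] at this

noncomputable def Fexpr (a : ℝ) : ℝ → ℝ :=
  fun x => Real.Gamma (x + a) / Real.Gamma x / x ^ a

lemma tendsto_div_add_one (a : ℝ) :
    Tendsto (fun x : ℝ => (x + a) / x) atTop (nhds 1) := by
  have h : Tendsto (fun x : ℝ => 1 + a / x) atTop (nhds 1) := by
    have := Filter.Tendsto.div_atTop (tendsto_const_nhds (x := a)) (tendsto_id (α := ℝ))
    simpa using tendsto_const_nhds.add this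
  refine h.congr' ?_
  filter_upwards [eventually_gt_atTop (0:ℝ)] with x hx
  field_simp

lemma tendsto_div_add_one' (a : ℝ) :
    Tendsto (fun x : ℝ => x / (x + a)) atTop (nhds 1) := by
  have h := ((tendsto_div_add_one a).inv₀ one_ne_zero)
  rw [inv_one] at h
  refine h.congr' ?_
  filter_upwards [eventually_gt_atTop (max 0 (-a))] with x hx
  have hx0 : 0 < x := lt_of_le_of_lt (le_max_left _ _) hx
  have hxa : 0 < x + a := by have := lt_of_le_of_lt (le_max_right _ _) hx; linarith
  rw [inv_div]

/-- Base case: `a ∈ [0,1]`. -/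
lemma F_base {a : ℝ} (ha0 : 0 ≤ a) (ha1 : a ≤ 1) :
    Tendsto (Fexpr a) atTop (nhds 1) := by
  have hlow : Tendsto (fun x : ℝ => (x / (x + a)) ^ (1 - a)) atTop (nhds 1) := by
    have := (tendsto_div_add_one' a).rpow_const (p := 1 - a) (Or.inr (by linarith))
    simpa using this
  refine tendsto_of_tendsto_of_tendsto_of_le_of_le' hlow tendsto_const_nhds ?_ ?_
  · -- lower bound
    filter_upwards [eventually_gt_atTop (max 1 (1 - a))] with x hx
    have hx1 : 1 < x := lt_of_le_of_lt (le_max_left _ _) hx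
    have hx0 : 0 < x := by linarith
    have hxa : 0 < x + a := by linarith
    have key := gamma_logconvex hxa (by linarith : (0:ℝ) < x + a + 1) (by linarith : 0 ≤ 1 - a) (by linarith)
    rw [show (1 - (1 - a)) * (x + a) + (1 - a) * (x + a + 1) = x + 1 by ring] at key
    rw [Real.Gamma_add_one hx0.ne', Real.Gamma_add_one hxa.ne'] at key
    rw [show (1 : ℝ) - (1 - a) = a from by ring] at key
    -- key : x * Γ x ≤ Γ(x+a)^a * ((x+a) * Γ(x+a))^(1-a)
    have hGx : 0 < Real.Gamma x := Real.Gamma_pos_of_pos hx0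
    have hGxa : 0 < Real.Gamma (x + a) := Real.Gamma_pos_of_pos hxa
    rw [Real.mul_rpow hxa.le hGxa.le] at key
    have key2 : x * Real.Gamma x ≤ Real.Gamma (x + a) * (x + a) ^ (1 - a) := by
      calc x * Real.Gamma x ≤ Real.Gamma (x + a) ^ a * ((x + a) ^ (1 - a) * Real.Gamma (x + a) ^ (1 - a)) := key
        _ = Real.Gamma (x + a) ^ (a + (1 - a)) * (x + a) ^ (1 - a) := by
            rw [Real.rpow_add hGxa]; ring
        _ = Real.Gamma (x + a) * (x + a) ^ (1 - a) := by norm_num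
    -- deduce (x/(x+a))^(1-a) ≤ Fexpr a x
    have hxpa : (0:ℝ) < (x + a) ^ (1 - a) := Real.rpow_pos_of_pos hxa _
    have hxa' : (0:ℝ) < x ^ a := Real.rpow_pos_of_pos hx0 _
    rw [Real.div_rpow hx0.le hxa.le, Fexpr, div_div,
      div_le_div_iff₀ hxpa (by positivity)]
    calc x ^ (1 - a) * (Real.Gamma x * x ^ a) = x ^ (1 - a) * x ^ a * Real.Gamma x := by ring
      _ = x * Real.Gamma x := by rw [← Real.rpow_add hx0]; norm_num
      _ ≤ Real.Gamma (x + a) * (x + a) ^ (1 - a) := key2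
  · -- upper bound
    filter_upwards [eventually_gt_atTop (1:ℝ)] with x hx1
    have hx0 : 0 < x := by linarith
    have key := gamma_logconvex hx0 (by linarith : (0:ℝ) < x + 1) ha0 ha1
    rw [show (1 - a) * x + a * (x + 1) = x + a by ring, Real.Gamma_add_one hx0.ne'] at key
    have hGx : 0 < Real.Gamma x := Real.Gamma_pos_of_pos hx0
    rw [Real.mul_rpow hx0.le hGx.le] at key
    have key2 : Real.Gamma (x + a) ≤ Real.Gamma x * x ^ a := by
      calc Real.Gamma (x + a) ≤ Real.Gamma x ^ (1 - a) * (x ^ a * Real.Gamma x ^ a) := key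
        _ = Real.Gamma x ^ ((1 - a) + a) * x ^ a := by rw [Real.rpow_add hGx]; ring
        _ = Real.Gamma x * x ^ a := by norm_num
    rw [Fexpr, div_div, div_le_one (by positivity)]
    exact key2

lemma F_step {a : ℝ} (h : Tendsto (Fexpr a) atTop (nhds 1)) :
    Tendsto (Fexpr (a + 1)) atTop (nhds 1) := by
  have := ((tendsto_div_add_one a).mul h)
  rw [mul_one] at this
  refine this.congr' ?_
  filter_upwards [eventually_gt_atTop (max 0 (-a))] with x hx
  have hx0 : 0 < x := lt_of_le_of_lt (le_max_left _ _) hx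
  have hxa : 0 < x + a := by have := lt_of_le_of_lt (le_max_right _ _) hx; linarith
  simp only [Fexpr]
  rw [show x + (a + 1) = (x + a) + 1 by ring, Real.Gamma_add_one hxa.ne',
    Real.rpow_add hx0, Real.rpow_one]
  field_simp

lemma F_step' {a : ℝ} (h : Tendsto (Fexpr (a + 1)) atTop (nhds 1)) :
    Tendsto (Fexpr a) atTop (nhds 1) := by
  have := ((tendsto_div_add_one' a).mul h)
  rw [mul_one] at this
  refine this.congr' ?_
  filter_upwards [eventually_gt_atTop (max 0 (-a))] with x hx
  have hx0 : 0 < x := lt_of_le_of_lt (le_max_left _ _) hx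
  have hxa : 0 < x + a := by have := lt_of_le_of_lt (le_max_right _ _) hx; linarith
  have hGx : Real.Gamma x ≠ 0 := (Real.Gamma_pos_of_pos hx0).ne'
  simp only [Fexpr]
  rw [show x + (a + 1) = (x + a) + 1 by ring, Real.Gamma_add_one hxa.ne',
    Real.rpow_add hx0, Real.rpow_one]
  have hxa' : (0:ℝ) < x ^ a := Real.rpow_pos_of_pos hx0 _
  field_simp

lemma F_all (a : ℝ) : Tendsto (Fexpr a) atTop (nhds 1) := by
  have key : ∀ (n : ℤ) (t : ℝ), 0 ≤ t → t ≤ 1 → Tendsto (Fexpr (t + n)) atTop (nhds 1) := by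
    intro n
    induction n using Int.induction_on with
    | zero => intro t h0 h1; simpa using F_base h0 h1
    | succ k ih => intro t h0 h1
                   have := F_step (ih t h0 h1)
                   convert this using 2
                   push_cast; ring
    | pred k ih => intro t h0 h1
                   apply F_step'
                   have := ih t h0 h1
                   convert this using 2
                   push_cast; ring
  have := key ⌊a⌋ (Int.fract a) (Int.fract_nonneg a) (Int.fract_lt_one a).le
  rwa [Int.fract_add_floor] at this

/-- Tricomi–Erdélyi: `Γ(x+a)/Γ(x+b) ~ x^(a-b)` as `x → ∞`. -/
theorem gamma_ratio_asymptotic (a b : ℝ) :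
    Tendsto (fun x : ℝ => Real.Gamma (x + a) / Real.Gamma (x + b) / x ^ (a - b))
      atTop (nhds 1) := by
  have h := (F_all a).div (F_all b) one_ne_zero
  rw [div_one] at h
  refine h.congr' ?_
  filter_upwards [eventually_gt_atTop (max 0 (max (-a) (-b)))] with x hx
  have hx0 : 0 < x := lt_of_le_of_lt (le_max_left _ _) hx
  have hxa : 0 < x + a := by
    have := lt_of_le_of_lt ((le_max_left _ _).trans (le_max_right _ _)) hx; linarith
  have hxb : 0 < x + b := by
    have := lt_of_le_of_lt ((le_max_right _ _).trans (le_max_right _ _)) hx; linarith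
  have hGx : Real.Gamma x ≠ 0 := (Real.Gamma_pos_of_pos hx0).ne'
  have hGb : Real.Gamma (x + b) ≠ 0 := (Real.Gamma_pos_of_pos hxb).ne'
  have hpa : (0:ℝ) < x ^ a := Real.rpow_pos_of_pos hx0 _
  have hpb : (0:ℝ) < x ^ b := Real.rpow_pos_of_pos hx0 _
  simp only [Pi.div_apply, Fexpr]
  rw [Real.rpow_sub hx0]
  field_simp
end

section
/- For θ > 1 - α with α ∈ (0,1), the series T(r) = ∑_{n=2}^∞ (Γ(n+r)/Γ(n+r+θ)) · (Γ(n-α)/Γ(n)) satisfies T(r) ~ (Γ(1-α)Γ(θ+α-1)/Γ(θ)) · r^{1-θ-α} as r → ∞. -/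
open Filter
open Real MeasureTheory Set

set_option maxHeartbeats 1000000
section Aux

private lemma tendsto_div_add_const (s : ℝ) :
    Tendsto (fun x : ℝ => x / (x + s)) atTop (nhds 1) := by
  have h0 : Tendsto (fun x : ℝ => 1 - s / (x + s)) atTop (nhds 1) := by
    have := Tendsto.div_atTop (tendsto_const_nhds (x := s))
      (tendsto_atTop_add_const_right atTop s tendsto_id)
    simpa using (tendsto_const_nhds (x := (1:ℝ))).sub this
  refine h0.congr' ?_
  filter_upwards [eventually_gt_atTop (max 0 (-s))] with x hx
  have hxs : x + s ≠ 0 := by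
    have : -s < x := lt_of_le_of_lt (le_max_right _ _) hx
    intro h; nlinarith
  field_simp
  ring

private lemma gamma_ratio_base {s : ℝ} (hs : 0 < s) (hs1 : s < 1) :
    Tendsto (fun x : ℝ => Real.Gamma (x + s) / (Real.Gamma x * x ^ s)) atTop (nhds 1) := by
  have hlow : Tendsto (fun x : ℝ => (x / (x + s)) ^ (1 - s)) atTop (nhds 1) := by
    have := (tendsto_div_add_const s).rpow_const (p := 1 - s) (Or.inl one_ne_zero)
    simpa using this
  refine tendsto_of_tendsto_of_tendsto_of_le_of_le' hlow tendsto_const_nhds ?_ ?_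
  · -- lower bound
    filter_upwards [eventually_gt_atTop (0:ℝ)] with x hx
    have hΓx : 0 < Real.Gamma x := Real.Gamma_pos_of_pos hx
    have hxs : 0 < x + s := by linarith
    have hΓxs : 0 < Real.Gamma (x + s) := Real.Gamma_pos_of_pos hxs
    have key : Real.Gamma (x + 1) ≤ Real.Gamma (x + s) * (x + s) ^ (1 - s) := by
      have h := Real.Gamma_mul_add_mul_le_rpow_Gamma_mul_rpow_Gamma hxs
        (by linarith : (0:ℝ) < x + s + 1) hs (by linarith : (0:ℝ) < 1 - s) (by ring)
      have harg : s * (x + s) + (1 - s) * (x + s + 1) = x + 1 := by ring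
      rw [harg] at h
      have h2 : Real.Gamma (x + s + 1) = (x + s) * Real.Gamma (x + s) :=
        Real.Gamma_add_one hxs.ne'
      calc Real.Gamma (x + 1) ≤ Real.Gamma (x+s) ^ s * Real.Gamma (x+s+1) ^ (1-s) := h
        _ = Real.Gamma (x+s) ^ s * ((x+s) ^ (1-s) * Real.Gamma (x+s) ^ (1-s)) := by
            rw [h2, Real.mul_rpow hxs.le hΓxs.le]
        _ = (Real.Gamma (x+s) ^ s * Real.Gamma (x+s) ^ (1-s)) * (x+s) ^ (1-s) := by ring
        _ = Real.Gamma (x + s) * (x + s) ^ (1 - s) := by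
            rw [← Real.rpow_add hΓxs]; norm_num
    have h3 : Real.Gamma (x + 1) = x * Real.Gamma x := Real.Gamma_add_one hx.ne'
    rw [h3] at key
    have h4 : (x / (x + s)) ^ (1 - s) = x ^ (1 - s) / (x + s) ^ (1 - s) :=
      Real.div_rpow hx.le hxs.le _
    rw [h4, div_le_div_iff₀ (by positivity) (by positivity)]
    -- x^(1-s) * (Γ x * x^s) ≤ Γ(x+s) * (x+s)^(1-s)
    calc x ^ (1-s) * (Real.Gamma x * x ^ s) = (x ^ (1-s) * x ^ s) * Real.Gamma x := by ring
      _ = x * Real.Gamma x := by rw [← Real.rpow_add hx]; norm_num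
      _ ≤ Real.Gamma (x + s) * (x + s) ^ (1 - s) := key
  · -- upper bound
    filter_upwards [eventually_gt_atTop (0:ℝ)] with x hx
    have hΓx : 0 < Real.Gamma x := Real.Gamma_pos_of_pos hx
    have key : Real.Gamma (x + s) ≤ Real.Gamma x * x ^ s := by
      have h := Real.Gamma_mul_add_mul_le_rpow_Gamma_mul_rpow_Gamma hx
        (by linarith : (0:ℝ) < x + 1) (by linarith : (0:ℝ) < 1 - s) hs (by ring)
      have harg : (1 - s) * x + s * (x + 1) = x + s := by ring
      rw [harg] at h
      have h2 : Real.Gamma (x + 1) = x * Real.Gamma x := Real.Gamma_add_one hx.ne'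
      calc Real.Gamma (x + s) ≤ Real.Gamma x ^ (1-s) * Real.Gamma (x+1) ^ s := h
        _ = Real.Gamma x ^ (1-s) * (x ^ s * Real.Gamma x ^ s) := by
            rw [h2, Real.mul_rpow hx.le hΓx.le]
        _ = (Real.Gamma x ^ (1-s) * Real.Gamma x ^ s) * x ^ s := by ring
        _ = Real.Gamma x * x ^ s := by rw [← Real.rpow_add hΓx]; norm_num
    exact div_le_one_of_le₀ key (by positivity)

private lemma gamma_ratio : ∀ (n : ℕ) (s : ℝ), 0 < s → s ≤ n →
    Tendsto (fun x : ℝ => Real.Gamma (x + s) / (Real.Gamma x * x ^ s)) atTop (nhds 1) := by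
  intro n
  induction n with
  | zero => intro s hs hsn; exact absurd (hs.trans_le hsn) (by norm_num)
  | succ n IH =>
    intro s hs hsn
    rcases lt_trichotomy s 1 with h1 | h1 | h1
    · exact gamma_ratio_base hs h1
    · subst h1
      have : Tendsto (fun x : ℝ => (1:ℝ)) atTop (nhds 1) := tendsto_const_nhds
      refine this.congr' ?_
      filter_upwards [eventually_gt_atTop (0:ℝ)] with x hx
      have hΓx : 0 < Real.Gamma x := Real.Gamma_pos_of_pos hx
      rw [Real.Gamma_add_one hx.ne', Real.rpow_one]
      field_simp
    · -- s > 1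
      have hs1 : 0 < s - 1 := by linarith
      have hsn' : s - 1 ≤ n := by
        rcases n with - | m
        · exfalso; push_cast at hsn; linarith
        · push_cast at hsn ⊢; linarith
      have IH' := IH (s - 1) hs1 hsn'
      have hfac : Tendsto (fun x : ℝ => (x + (s - 1)) / x) atTop (nhds 1) := by
        have h0 : Tendsto (fun x : ℝ => 1 + (s-1) / x) atTop (nhds 1) := by
          simpa using (tendsto_const_nhds (x := (1:ℝ))).add
            (Tendsto.div_atTop (tendsto_const_nhds (x := s - 1)) tendsto_id)
        refine h0.congr' ?_
        filter_upwards [eventually_gt_atTop (0:ℝ)] with x hx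
        field_simp
      have := IH'.mul hfac
      rw [mul_one] at this
      refine this.congr' ?_
      filter_upwards [eventually_gt_atTop (0:ℝ)] with x hx
      have hΓx : 0 < Real.Gamma x := Real.Gamma_pos_of_pos hx
      have hxs1 : 0 < x + (s - 1) := by linarith
      have hrec : Real.Gamma (x + s) = (x + (s-1)) * Real.Gamma (x + (s-1)) := by
        have : x + s = (x + (s-1)) + 1 := by ring
        rw [this, Real.Gamma_add_one hxs1.ne']
      have hpow : x ^ s = x ^ (s-1) * x := by
        have h := Real.rpow_add hx (s-1) 1
        rw [Real.rpow_one] at h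
        rw [← h]; norm_num
      rw [hrec, hpow]
      have h1 : Real.Gamma x * (x ^ (s-1) * x) ≠ 0 := by positivity
      field_simp

private lemma gamma_ratio' {s : ℝ} (hs : 0 < s) :
    Tendsto (fun r : ℝ => Real.Gamma (r + 1) / Real.Gamma (r + 1 + s) * r ^ s) atTop (nhds 1) := by
  obtain ⟨n, hn⟩ := exists_nat_ge s
  have h1 : Tendsto (fun x : ℝ => Real.Gamma x * x ^ s / Real.Gamma (x + s)) atTop (nhds 1) := by
    have := (gamma_ratio n s hs hn).inv₀ one_ne_zero
    simp only [inv_div, inv_one] at this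
    exact this
  have h2 : Tendsto (fun r : ℝ => Real.Gamma (r+1) * (r+1) ^ s / Real.Gamma (r + 1 + s))
      atTop (nhds 1) := h1.comp (tendsto_atTop_add_const_right atTop 1 tendsto_id)
  have h3 : Tendsto (fun r : ℝ => (r / (r+1)) ^ s) atTop (nhds 1) := by
    simpa using (tendsto_div_add_const 1).rpow_const (p := s) (Or.inl one_ne_zero)
  have := h2.mul h3
  rw [mul_one] at this
  refine this.congr' ?_
  filter_upwards [eventually_gt_atTop (0:ℝ)] with r hr
  have hr1 : (0:ℝ) < r + 1 := by linarith
  have hd : (r / (r+1)) ^ s = r ^ s / (r+1) ^ s := Real.div_rpow hr.le hr1.le _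
  have hΓ : 0 < Real.Gamma (r + 1 + s) := Real.Gamma_pos_of_pos (by linarith)
  rw [hd]
  field_simp

section BC

noncomputable def bc (α : ℝ) (m : ℕ) : ℝ :=
  Real.Gamma (m + 1 - α) / (Real.Gamma (m + 1) * Real.Gamma (1 - α))

variable {α : ℝ} (hα : α ∈ Set.Ioo (0:ℝ) 1)
include hα

private lemma bc_zero : bc α 0 = 1 := by
  have h : (0:ℝ) < 1 - α := by have := hα.2; linarith
  simp [bc, Real.Gamma_one, (Real.Gamma_pos_of_pos h).ne']

private lemma bc_rec (m : ℕ) : bc α (m+1) = bc α m * ((m + 1 - α) / (m + 1)) := by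
  have h1 : ((m:ℝ) + 1 - α) ≠ 0 := by
    have := hα.2; have hm : (0:ℝ) ≤ m := Nat.cast_nonneg m; intro h; linarith
  have h2 : ((m:ℝ) + 1) ≠ 0 := by positivity
  have e1 : ((m+1:ℕ):ℝ) + 1 - α = ((m:ℝ) + 1 - α) + 1 := by push_cast; ring
  have e2 : ((m+1:ℕ):ℝ) + 1 = ((m:ℝ) + 1) + 1 := by push_cast; ring
  rw [bc, e1, e2, Real.Gamma_add_one h1, Real.Gamma_add_one h2, bc]
  field_simp

private lemma bc_pos (m : ℕ) : 0 < bc α m := by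
  induction m with
  | zero => rw [bc_zero hα]; norm_num
  | succ m IH =>
    rw [bc_rec hα]
    have := hα.2
    have h1 : (0:ℝ) < (m:ℝ) + 1 - α := by
      have hm : (0:ℝ) ≤ m := Nat.cast_nonneg m; linarith
    positivity

private lemma bc_le_one (m : ℕ) : bc α m ≤ 1 := by
  induction m with
  | zero => rw [bc_zero hα]
  | succ m IH =>
    rw [bc_rec hα]
    have hα1 := hα.1
    have h2 : (0:ℝ) < (m:ℝ) + 1 := by positivity
    have h3 : ((m:ℝ) + 1 - α) / ((m:ℝ) + 1) ≤ 1 := by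
      rw [div_le_one h2]; linarith
    have h1 : (0:ℝ) < (m:ℝ) + 1 - α := by
      have := hα.2; have hm : (0:ℝ) ≤ m := Nat.cast_nonneg m; linarith
    calc bc α m * (((m:ℝ) + 1 - α) / ((m:ℝ) + 1)) ≤ 1 * 1 :=
      mul_le_mul IH h3 (by positivity) (by linarith [bc_pos hα m])
    _ = 1 := by norm_num

private lemma hasSum_bc {x : ℝ} (hx : x ∈ Set.Ico (0:ℝ) 1) :
    HasSum (fun m : ℕ => bc α m * x ^ m) ((1 - x) ^ (α - 1)) := by
  obtain ⟨hx0, hx1⟩ := hx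
  set ρ : ℝ := (1 + x) / 2 with hρdef
  have hρ0 : 0 < ρ := by positivity
  have hρ1 : ρ < 1 := by rw [hρdef]; linarith
  have hxρ : x < ρ := by rw [hρdef]; linarith
  set t : Set ℝ := Set.Ioo (-ρ) ρ with htdef
  have hot : IsOpen t := isOpen_Ioo
  have hct : IsPreconnected t := (convex_Ioo _ _).isPreconnected
  have h0t : (0:ℝ) ∈ t := by constructor <;> simp [hρ0, hρ0.le] <;> linarith
  have hxt : x ∈ t := by constructor <;> linarith
  -- summable bound on derivatives
  set u : ℕ → ℝ := fun m => (m : ℝ) * ρ ^ (m - 1) with hudef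
  have hu : Summable u := by
    have h := summable_pow_mul_geometric_of_norm_lt_one 1 (r := ρ) (by
      rw [Real.norm_eq_abs, abs_of_pos hρ0]; exact hρ1)
    have h2 := h.mul_left (1/ρ)
    refine h2.of_nonneg_of_le (fun m => by positivity) (fun m => ?_)
    rcases m with - | m
    · simp [hudef]
    · rw [hudef]; dsimp only
      have he : ρ ^ (m + 1 - 1) = ρ ^ (m+1) / ρ := by
        rw [pow_succ]; field_simp; simp
      rw [he, pow_one]
      exact le_of_eq (by ring)
  -- derivative functions
  have hg : ∀ (m : ℕ) (y : ℝ), HasDerivAt (fun z => bc α m * z ^ m)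
      (bc α m * (m * y ^ (m-1))) y := by
    intro m y
    exact (hasDerivAt_pow m y).const_mul _
  have hg' : ∀ (m : ℕ) (y : ℝ), y ∈ t → ‖bc α m * (m * y ^ (m-1))‖ ≤ u m := by
    intro m y hy
    have hyρ : |y| ≤ ρ := by
      rw [abs_le]; exact ⟨hy.1.le, hy.2.le⟩
    have h1 : ‖bc α m * (m * y ^ (m-1))‖ = bc α m * (m * |y| ^ (m-1)) := by
      rw [norm_mul, norm_mul, Real.norm_eq_abs, Real.norm_eq_abs, Real.norm_eq_abs,
        abs_of_pos (bc_pos hα m), abs_of_nonneg (by positivity : (0:ℝ) ≤ (m:ℝ)), abs_pow]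
    rw [h1, hudef]
    have h2 : |y| ^ (m-1) ≤ ρ ^ (m-1) := pow_le_pow_left₀ (abs_nonneg y) hyρ _
    calc bc α m * ((m:ℝ) * |y| ^ (m-1)) ≤ 1 * ((m:ℝ) * ρ ^ (m-1)) := by
          apply mul_le_mul (bc_le_one hα m) (by gcongr) (by positivity) zero_le_one
      _ = (m:ℝ) * ρ ^ (m-1) := one_mul _
  have hsum0 : Summable (fun m : ℕ => bc α m * (0:ℝ) ^ m) := by
    apply summable_of_ne_finset_zero (s := {0})
    intro m hm
    have : m ≠ 0 := by simpa using hm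
    simp [zero_pow this]
  -- the sum function
  have key : ∀ y ∈ t, HasDerivAt (fun z => ∑' m, bc α m * z ^ m)
      (∑' m, bc α m * (m * y ^ (m-1))) y := by
    intro y hy
    exact hasDerivAt_tsum_of_isPreconnected hu hot hct (fun m y _ => hg m y) hg' h0t hsum0 hy
  set g : ℝ → ℝ := fun z => ∑' m, bc α m * z ^ m with hgdef
  -- summability at each point of t
  have hsum : ∀ y ∈ t, Summable (fun m : ℕ => bc α m * y ^ m) := by
    intro y hy
    have hyρ : |y| ≤ ρ := by rw [abs_le]; exact ⟨hy.1.le, hy.2.le⟩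
    refine Summable.of_norm_bounded (summable_geometric_of_lt_one hρ0.le hρ1) (fun m => ?_)
    rw [norm_mul, Real.norm_eq_abs, Real.norm_eq_abs, abs_of_pos (bc_pos hα m), abs_pow]
    calc bc α m * |y| ^ m ≤ 1 * ρ ^ m := by
          apply mul_le_mul (bc_le_one hα m) (by gcongr) (by positivity) zero_le_one
      _ = ρ ^ m := one_mul _
  have hsumD : ∀ y ∈ t, Summable (fun m : ℕ => bc α m * (m * y ^ (m-1))) := by
    intro y hy
    exact Summable.of_norm_bounded hu (fun m => hg' m y hy)
  -- the ODE : (1-y) * D y = (1-α) * g y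
  have hODE : ∀ y ∈ t, (1 - y) * (∑' m, bc α m * (m * y ^ (m-1))) = (1 - α) * g y := by
    intro y hy
    set D := ∑' m, bc α m * (m * y ^ (m-1)) with hDdef
    have hD : HasSum (fun m : ℕ => bc α m * (m * y ^ (m-1))) D := (hsumD y hy).hasSum
    have hS : HasSum (fun m : ℕ => bc α m * y ^ m) (g y) := (hsum y hy).hasSum
    have hshift : HasSum (fun n : ℕ => bc α n * ((n + 1 - α) * y ^ n)) D := by
      have h0 : bc α 0 * ((0:ℕ) * y ^ (0-1)) = 0 := by simp
      have h1 : HasSum (fun n : ℕ => bc α (n+1) * (((n+1 : ℕ) : ℝ) * y ^ ((n+1)-1))) D := by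
        rw [hasSum_nat_add_iff (f := fun m : ℕ => bc α m * ((m : ℝ) * y ^ (m-1))) 1]
        simpa [h0] using hD
      refine h1.congr_fun (fun n => ?_)
      have : bc α (n+1) * ((n:ℝ)+1) = bc α n * ((n:ℝ) + 1 - α) := by
        rw [bc_rec hα]
        have h2 : ((n:ℝ) + 1) ≠ 0 := by positivity
        field_simp
      push_cast
      calc bc α n * (((n:ℝ) + 1 - α) * y ^ n) = (bc α n * ((n:ℝ) + 1 - α)) * y ^ n := by ring
        _ = (bc α (n+1) * ((n:ℝ)+1)) * y ^ n := by rw [this]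
        _ = bc α (n+1) * (((n:ℝ)+1) * y ^ n) := by ring
    have hyD : HasSum (fun m : ℕ => bc α m * (m * y ^ m)) (y * D) := by
      have := hD.mul_left y
      refine this.congr_fun (fun m => ?_)
      rcases m with - | m
      · simp
      · have : y ^ (m + 1 - 1) * y = y ^ (m+1) := by
          rw [Nat.add_sub_cancel, pow_succ]
        rw [← this]; ring
    have hsub : HasSum (fun n : ℕ => bc α n * ((n + 1 - α) * y ^ n) - bc α n * (n * y ^ n))
        (D - y * D) := hshift.sub hyD
    have hsub' : HasSum (fun n : ℕ => (1 - α) * (bc α n * y ^ n)) (D - y * D) := by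
      refine hsub.congr_fun (fun n => ?_); ring
    have hfin : HasSum (fun n : ℕ => (1 - α) * (bc α n * y ^ n)) ((1-α) * g y) :=
      hS.mul_left _
    have := hsub'.unique hfin
    rw [hDdef]; linarith [this]
  -- h has zero derivative on t
  have hconst : ∀ y ∈ t, HasDerivAt (fun z => g z * (1 - z) ^ (1 - α)) 0 y := by
    intro y hy
    have hy1 : 0 < 1 - y := by have h := hy.2; have : y < ρ := h; linarith
    have hd1 : HasDerivAt g (∑' m, bc α m * (m * y ^ (m-1))) y := key y hy
    have hd2 : HasDerivAt (fun z : ℝ => (1 - z) ^ (1 - α))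
        ((-1) * (1 - α) * (1 - y) ^ (1 - α - 1)) y := by
      have hq : HasDerivAt (fun z : ℝ => 1 - z) (-1) y := by
        simpa using (hasDerivAt_id' y).const_sub (1:ℝ)
      exact hq.rpow_const (Or.inl hy1.ne')
    have := hd1.mul hd2
    refine this.congr_deriv ?_
    set D := ∑' m, bc α m * (m * y ^ (m-1))
    have hODE' := hODE y hy
    have e1 : (1 - y) ^ (1 - α) = (1 - y) * (1 - y) ^ (-α) := by
      nth_rewrite 2 [← Real.rpow_one (1-y)]
      rw [← Real.rpow_add hy1]
      congr 1
    have e2 : (1 - y) ^ (1 - α - 1) = (1 - y) ^ (-α) := by norm_num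
    rw [e1, e2]
    have : D * ((1 - y) * (1 - y) ^ (-α)) + g y * ((-1) * (1 - α) * (1 - y) ^ (-α))
        = (1 - y) ^ (-α) * ((1 - y) * D - (1 - α) * g y) := by ring
    rw [this, hODE']
    ring
  -- conclude constancy on [0, x]
  have hIcc : Set.Icc (0:ℝ) x ⊆ t := by
    intro y hy
    constructor
    · linarith [hy.1]
    · linarith [hy.2]
  have hcont : ContinuousOn (fun z => g z * (1 - z) ^ (1 - α)) (Set.Icc 0 x) :=
    fun y hy => ((hconst y (hIcc hy)).continuousAt).continuousWithinAt
  have hder : ∀ y ∈ Set.Ico (0:ℝ) x, HasDerivWithinAt (fun z => g z * (1 - z) ^ (1 - α))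
      0 (Set.Ici y) y :=
    fun y hy => (hconst y (hIcc (Set.Ico_subset_Icc_self hy))).hasDerivWithinAt
  have hval := constant_of_has_deriv_right_zero hcont hder x (Set.right_mem_Icc.mpr hx0)
  have hg0 : g 0 * (1 - 0 : ℝ) ^ (1 - α) = 1 := by
    have : g 0 = 1 := by
      show (∑' m : ℕ, bc α m * (0:ℝ) ^ m) = 1
      rw [tsum_eq_single 0 (fun m hm => by simp [zero_pow hm])]
      simp [bc_zero hα]
    rw [this]; norm_num
  rw [hg0] at hval
  have hx1' : (0:ℝ) < 1 - x := by linarith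
  have hgx : g x = (1 - x) ^ (α - 1) := by
    have hne : (1 - x) ^ (1 - α) ≠ 0 := by positivity
    have e : (1 - x) ^ (α - 1) = ((1 - x) ^ (1 - α))⁻¹ := by
      rw [← Real.rpow_neg hx1'.le]; norm_num
    rw [e]
    field_simp at hval ⊢
    linarith [hval]
  rw [← hgx]
  exact (hsum x hxt).hasSum

end BC

private lemma ofReal_integrand (a b : ℝ) :
    ∀ x ∈ Set.uIcc (0:ℝ) 1,
      (x : ℂ) ^ ((a:ℂ) - 1) * (1 - (x:ℂ)) ^ ((b:ℂ) - 1)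
        = ((x ^ (a-1) * (1-x) ^ (b-1) : ℝ) : ℂ) := by
  intro x hx
  rw [Set.uIcc_of_le (by norm_num : (0:ℝ) ≤ 1)] at hx
  obtain ⟨h0, h1⟩ := hx
  have e1 : (x : ℂ) ^ ((a:ℂ) - 1) = ((x ^ (a-1) : ℝ) : ℂ) := by
    rw [Complex.ofReal_cpow h0]; push_cast; ring_nf
  have e2 : (1 - (x:ℂ)) ^ ((b:ℂ) - 1) = (((1-x) ^ (b-1) : ℝ) : ℂ) := by
    rw [Complex.ofReal_cpow (by linarith : (0:ℝ) ≤ 1 - x)]; push_cast; ring_nf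
  rw [e1, e2, ← Complex.ofReal_mul]

private lemma betaIntegrable {a b : ℝ} (ha : 0 < a) (hb : 0 < b) :
    IntegrableOn (fun x : ℝ => x ^ (a-1) * (1-x) ^ (b-1)) (Set.Ioo 0 1) := by
  have hc := Complex.betaIntegral_convergent (u := (a:ℂ)) (v := (b:ℂ))
    (by simpa using ha) (by simpa using hb)
  rw [intervalIntegrable_iff_integrableOn_Ioc_of_le (by norm_num : (0:ℝ) ≤ 1)] at hc
  have hIoo : IntegrableOn (fun x : ℝ => (x : ℂ) ^ ((a:ℂ) - 1) * (1 - (x:ℂ)) ^ ((b:ℂ) - 1))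
      (Set.Ioo 0 1) := hc.mono_set Set.Ioo_subset_Ioc_self
  have := hIoo.congr_fun (fun x hx => ofReal_integrand a b x
    (Set.mem_uIcc.mpr (Or.inl ⟨hx.1.le, hx.2.le⟩))) measurableSet_Ioo
  have hre := this.re
  simpa [IntegrableOn] using hre

private lemma realBeta {a b : ℝ} (ha : 0 < a) (hb : 0 < b) :
    ∫ x in Set.Ioo (0:ℝ) 1, x ^ (a-1) * (1-x) ^ (b-1)
      = Real.Gamma a * Real.Gamma b / Real.Gamma (a+b) := by
  have hG : 0 < Real.Gamma (a+b) := Real.Gamma_pos_of_pos (by linarith)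
  have hc := Complex.Gamma_mul_Gamma_eq_betaIntegral (s := (a:ℂ)) (t := (b:ℂ))
    (by simpa using ha) (by simpa using hb)
  have hcongr : Complex.betaIntegral (a:ℂ) (b:ℂ)
      = ((∫ x in Set.Ioo (0:ℝ) 1, x ^ (a-1) * (1-x) ^ (b-1) : ℝ) : ℂ) := by
    rw [Complex.betaIntegral]
    rw [intervalIntegral.integral_congr (g := fun x : ℝ =>
      ((x ^ (a-1) * (1-x) ^ (b-1) : ℝ) : ℂ)) (ofReal_integrand a b)]
    rw [intervalIntegral.integral_ofReal]
    rw [intervalIntegral.integral_of_le (by norm_num : (0:ℝ) ≤ 1),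
      MeasureTheory.integral_Ioc_eq_integral_Ioo]
  rw [hcongr] at hc
  have hab : ((a:ℂ) + b) = ((a + b : ℝ) : ℂ) := by push_cast; ring
  rw [hab, Complex.Gamma_ofReal, Complex.Gamma_ofReal, Complex.Gamma_ofReal] at hc
  have hre : Real.Gamma a * Real.Gamma b
      = Real.Gamma (a+b) * ∫ x in Set.Ioo (0:ℝ) 1, x ^ (a-1) * (1-x) ^ (b-1) := by
    have := congrArg Complex.re hc
    simpa using this
  rw [hre]
  field_simp



private lemma tsum_eq {α θ : ℝ} (hα : α ∈ Set.Ioo (0:ℝ) 1) (hθ : 1 - α < θ)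
    {r : ℝ} (hr : 0 < r) :
    (∑' n : ℕ, (Real.Gamma ((n : ℝ) + 2 + r) / Real.Gamma ((n : ℝ) + 2 + r + θ))
        * (Real.Gamma ((n : ℝ) + 2 - α) / Real.Gamma ((n : ℝ) + 2)))
      = Real.Gamma (1-α) / Real.Gamma θ *
        (Real.Gamma (r+1) * Real.Gamma (θ+α-1) / Real.Gamma (r+θ+α)
          - Real.Gamma (r+1) * Real.Gamma θ / Real.Gamma (r+θ+1)) := by
  obtain ⟨hα0, hα1⟩ := hα
  have hθ0 : 0 < θ := by linarith
  have hθα : 0 < θ + α - 1 := by linarith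
  have hΓθ : 0 < Real.Gamma θ := Real.Gamma_pos_of_pos hθ0
  have hΓ1α : 0 < Real.Gamma (1-α) := Real.Gamma_pos_of_pos (by linarith)
  -- the coefficients
  set γ : ℕ → ℝ := fun n => Real.Gamma ((n : ℝ) + 2 - α) / Real.Gamma ((n : ℝ) + 2)
    with hγdef
  have hγpos : ∀ n, 0 < γ n := by
    intro n
    have hn : (0:ℝ) ≤ n := Nat.cast_nonneg n
    exact div_pos (Real.Gamma_pos_of_pos (by linarith)) (Real.Gamma_pos_of_pos (by linarith))
  have hγbc : ∀ n : ℕ, γ n = Real.Gamma (1-α) * bc α (n+1) := by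
    intro n
    have hn : (0:ℝ) ≤ n := Nat.cast_nonneg n
    rw [hγdef, bc]
    have e1 : ((n+1:ℕ):ℝ) + 1 - α = (n:ℝ) + 2 - α := by push_cast; ring
    have e2 : ((n+1:ℕ):ℝ) + 1 = (n:ℝ) + 2 := by push_cast; ring
    rw [e1, e2]
    have h2 : Real.Gamma ((n:ℝ)+2) ≠ 0 := (Real.Gamma_pos_of_pos (by linarith)).ne'
    field_simp
  -- the functions
  set f : ℕ → ℝ → ℝ := fun n x => γ n * (x ^ ((n:ℝ)+2+r-1) * (1-x) ^ (θ-1)) with hfdef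
  set μ : Measure ℝ := volume.restrict (Set.Ioo 0 1) with hμdef
  have hcont : ∀ (c d : ℝ), ContinuousOn (fun x : ℝ => x ^ c * (1-x) ^ d) (Set.Ioo 0 1) := by
    intro c d
    intro x hx
    obtain ⟨hx0, hx1⟩ := hx
    apply ContinuousAt.continuousWithinAt
    exact (Real.continuousAt_rpow_const x c (Or.inl hx0.ne')).mul
      ((Real.continuousAt_rpow_const (1-x) d
        (Or.inl (by intro h; linarith))).comp
        ((continuous_const.sub continuous_id).continuousAt))
  have hfmeas : ∀ n, AEStronglyMeasurable (f n) μ := by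
    intro n
    exact (((hcont _ _).aestronglyMeasurable measurableSet_Ioo).const_mul _)
  have hfint : ∀ n : ℕ, IntegrableOn (fun x : ℝ => x ^ ((n:ℝ)+2+r-1) * (1-x) ^ (θ-1))
      (Set.Ioo 0 1) := by
    intro n
    have hn : (0:ℝ) ≤ n := Nat.cast_nonneg n
    exact betaIntegrable (by linarith : (0:ℝ) < (n:ℝ)+2+r) hθ0
  have hfint' : ∀ n : ℕ, Integrable (f n) μ := by
    intro n
    exact ((hfint n).const_mul _)
  -- pointwise sum
  have hpt : ∀ x ∈ Set.Ioo (0:ℝ) 1, HasSum (fun n => f n x)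
      (Real.Gamma (1-α) * (x ^ r * (1-x) ^ (θ-1)) * ((1-x) ^ (α-1) - 1)) := by
    intro x hx
    obtain ⟨hx0, hx1⟩ := hx
    have hbc := hasSum_bc ⟨hα0, hα1⟩ (x := x) ⟨hx0.le, hx1⟩
    have hshift : HasSum (fun n : ℕ => bc α (n+1) * x ^ (n+1)) ((1-x) ^ (α-1) - 1) := by
      rw [hasSum_nat_add_iff (f := fun m : ℕ => bc α m * x ^ m) 1]
      have hbc0 : bc α 0 = 1 := by
        rw [bc]
        norm_num [Real.Gamma_one]
        exact hΓ1α.ne'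
      simpa [hbc0] using hbc
    have hmul := hshift.mul_left (Real.Gamma (1-α) * (x ^ r * (1-x) ^ (θ-1)))
    refine HasSum.congr_fun hmul (fun n => ?_)
    have ex : x ^ ((n:ℝ)+2+r-1) = x ^ (n+1:ℕ) * x ^ r := by
      rw [← Real.rpow_natCast x (n+1), ← Real.rpow_add hx0]
      congr 1
      push_cast
      ring
    show f n x = _
    rw [hfdef]
    dsimp only
    rw [hγbc n, ex]
    ring
  -- nonnegativity of the terms
  have hfnn : ∀ (n : ℕ), ∀ x ∈ Set.Ioo (0:ℝ) 1, 0 ≤ f n x := by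
    intro n x hx
    obtain ⟨hx0, hx1⟩ := hx
    have h1x : (0:ℝ) < 1-x := by linarith
    rw [hfdef]
    dsimp only
    have := hγpos n
    positivity
  -- dominating function
  have hr1 : (0:ℝ) < r + 1 := by linarith
  set G : ℝ → ℝ := fun x => Real.Gamma (1-α) * (x ^ (r+1-1) * (1-x) ^ (θ+α-1-1)) with hGdef
  have hGint : Integrable G μ := ((betaIntegrable hr1 hθα).const_mul _)
  have hSG : ∀ x ∈ Set.Ioo (0:ℝ) 1,
      Real.Gamma (1-α) * (x ^ r * (1-x) ^ (θ-1)) * ((1-x) ^ (α-1) - 1) ≤ G x := by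
    intro x hx
    obtain ⟨hx0, hx1⟩ := hx
    have h1x : (0:ℝ) < 1 - x := by linarith
    have e3 : (1-x) ^ (θ-1) * (1-x) ^ (α-1) = (1-x) ^ (θ+α-1-1) := by
      rw [← Real.rpow_add h1x]; congr 1; ring
    have e4 : x ^ (r+1-1) = x ^ r := by congr 1; ring
    rw [hGdef]
    dsimp only
    rw [e4]
    have hpos : 0 ≤ Real.Gamma (1-α) * (x ^ r * (1-x) ^ (θ-1)) := by positivity
    calc Real.Gamma (1-α) * (x ^ r * (1-x) ^ (θ-1)) * ((1-x) ^ (α-1) - 1)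
        ≤ Real.Gamma (1-α) * (x ^ r * (1-x) ^ (θ-1)) * (1-x) ^ (α-1) :=
          mul_le_mul_of_nonneg_left (by linarith) hpos
      _ = Real.Gamma (1-α) * (x ^ r * ((1-x) ^ (θ-1) * (1-x) ^ (α-1))) := by ring
      _ = Real.Gamma (1-α) * (x ^ r * (1-x) ^ (θ+α-1-1)) := by rw [e3]
  -- values of the integrals
  have hbval : ∀ n : ℕ, (∫ x, f n x ∂μ)
      = γ n * (Real.Gamma ((n:ℝ)+2+r) * Real.Gamma θ / Real.Gamma ((n:ℝ)+2+r+θ)) := by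
    intro n
    have hn : (0:ℝ) ≤ n := Nat.cast_nonneg n
    rw [hμdef, hfdef]
    dsimp only
    rw [MeasureTheory.integral_const_mul]
    rw [realBeta (by linarith : (0:ℝ) < (n:ℝ)+2+r) hθ0]
  have hbnn : ∀ n : ℕ, 0 ≤ ∫ x, f n x ∂μ := by
    intro n
    rw [hμdef]
    exact MeasureTheory.setIntegral_nonneg measurableSet_Ioo (hfnn n)
  -- partial sums bounded
  have hpartial : ∀ F : Finset ℕ, ∑ n ∈ F, (∫ x, f n x ∂μ) ≤ ∫ x, G x ∂μ := by
    intro F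
    rw [← MeasureTheory.integral_finset_sum F (fun n _ => hfint' n)]
    rw [hμdef]
    apply MeasureTheory.setIntegral_mono_on
      (MeasureTheory.integrable_finset_sum F (fun n _ => hfint' n))
      hGint measurableSet_Ioo
    intro x hx
    exact le_trans (sum_le_hasSum F (fun n _ => hfnn n x hx) (hpt x hx)) (hSG x hx)
  have hbsum : Summable (fun n => ∫ x, f n x ∂μ) :=
    summable_of_sum_le hbnn hpartial
  -- lintegral condition
  have hae : ∀ n : ℕ, 0 ≤ᵐ[μ] f n := by
    intro n
    rw [hμdef]
    filter_upwards [ae_restrict_mem measurableSet_Ioo] with x hx using hfnn n x hx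
  have hlint : ∀ n : ℕ, (∫⁻ x, ‖f n x‖₊ ∂μ) = ENNReal.ofReal (∫ x, f n x ∂μ) := by
    intro n
    rw [MeasureTheory.ofReal_integral_eq_lintegral_ofReal (hfint' n) (hae n)]
    apply lintegral_congr_ae
    filter_upwards [hae n] with x hx
    exact Real.enorm_eq_ofReal hx
  have htsumlint : (∑' n : ℕ, ∫⁻ x, ‖f n x‖₊ ∂μ) ≠ ⊤ := by
    have heq : (∑' n : ℕ, ∫⁻ x, ‖f n x‖₊ ∂μ)
        = ENNReal.ofReal (∑' n : ℕ, ∫ x, f n x ∂μ) := by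
      rw [ENNReal.ofReal_tsum_of_nonneg hbnn hbsum]
      exact tsum_congr hlint
    rw [heq]
    exact ENNReal.ofReal_ne_top
  -- swap integral and sum
  have hswap := MeasureTheory.integral_tsum hfmeas htsumlint
  -- evaluate the integral of the sum
  have hLHS : (∫ x, (∑' n, f n x) ∂μ)
      = Real.Gamma (1-α) * (Real.Gamma (r+1) * Real.Gamma (θ+α-1) / Real.Gamma (r+θ+α)
          - Real.Gamma (r+1) * Real.Gamma θ / Real.Gamma (r+θ+1)) := by
    have hcongr : Set.EqOn (fun x => ∑' n, f n x)
        (fun x => Real.Gamma (1-α) * (x ^ (r+1-1) * (1-x) ^ (θ+α-1-1))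
          - Real.Gamma (1-α) * (x ^ (r+1-1) * (1-x) ^ (θ-1))) (Set.Ioo 0 1) := by
      intro x hx
      obtain ⟨hx0, hx1⟩ := hx
      have h1x : (0:ℝ) < 1-x := by linarith
      dsimp only
      rw [(hpt x ⟨hx0, hx1⟩).tsum_eq]
      have e3 : (1-x) ^ (θ-1) * (1-x) ^ (α-1) = (1-x) ^ (θ+α-1-1) := by
        rw [← Real.rpow_add h1x]; congr 1; ring
      have e4 : x ^ (r+1-1) = x ^ r := by congr 1; ring
      rw [e4, ← e3]
      ring
    rw [hμdef]
    rw [MeasureTheory.setIntegral_congr_fun measurableSet_Ioo hcongr]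
    rw [MeasureTheory.integral_sub ((betaIntegrable hr1 hθα).const_mul _)
      ((betaIntegrable hr1 hθ0).const_mul _)]
    rw [MeasureTheory.integral_const_mul, MeasureTheory.integral_const_mul]
    rw [realBeta hr1 hθα, realBeta hr1 hθ0]
    rw [show r+1+(θ+α-1) = r+θ+α from by ring, show r+1+θ = r+θ+1 from by ring]
    ring
  -- put everything together
  have hb : (∑' n : ℕ, ∫ x, f n x ∂μ)
      = Real.Gamma θ * ∑' n : ℕ,
          (Real.Gamma ((n:ℝ)+2+r) / Real.Gamma ((n:ℝ)+2+r+θ)) * γ n := by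
    rw [← tsum_mul_left]
    apply tsum_congr
    intro n
    rw [hbval n]
    ring
  have hkey : Real.Gamma θ * (∑' n : ℕ,
      (Real.Gamma ((n:ℝ)+2+r) / Real.Gamma ((n:ℝ)+2+r+θ)) * γ n)
      = Real.Gamma (1-α) * (Real.Gamma (r+1) * Real.Gamma (θ+α-1) / Real.Gamma (r+θ+α)
          - Real.Gamma (r+1) * Real.Gamma θ / Real.Gamma (r+θ+1)) := by
    rw [← hb, ← hswap, hLHS]
  rw [div_mul_eq_mul_div, eq_div_iff hΓθ.ne']
  linarith [hkey]

end Aux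

/-- For `α ∈ (0,1)` and `θ > 1 - α`, the series
`T(r) = ∑_{n=2}^∞ (Γ(n+r)/Γ(n+r+θ)) (Γ(n-α)/Γ(n))` satisfies
`T(r) ~ (Γ(1-α)Γ(θ+α-1)/Γ(θ)) r^{1-θ-α}` as `r → ∞`. -/
theorem tbnbp_sum_asymptotic (α θ : ℝ) (hα : α ∈ Set.Ioo (0 : ℝ) 1)
    (hθ : 1 - α < θ) :
    Tendsto (fun r : ℝ =>
        (∑' n : ℕ, (Real.Gamma ((n : ℝ) + 2 + r) / Real.Gamma ((n : ℝ) + 2 + r + θ))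
            * (Real.Gamma ((n : ℝ) + 2 - α) / Real.Gamma ((n : ℝ) + 2)))
          / (Real.Gamma (1 - α) * Real.Gamma (θ + α - 1) / Real.Gamma θ
              * r ^ (1 - θ - α)))
      atTop (nhds 1) := by
  obtain ⟨hα0, hα1⟩ := hα
  have hθ0 : 0 < θ := by linarith
  have hθα : 0 < θ + α - 1 := by linarith
  have hΓθ : 0 < Real.Gamma θ := Real.Gamma_pos_of_pos hθ0
  have hΓθα : 0 < Real.Gamma (θ+α-1) := Real.Gamma_pos_of_pos hθα
  have hΓ1α : 0 < Real.Gamma (1-α) := Real.Gamma_pos_of_pos (by linarith)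
  -- the three limits
  have h1 : Tendsto (fun r : ℝ => Real.Gamma (r+1) / Real.Gamma (r+θ+α) * r ^ (θ+α-1))
      atTop (nhds 1) := by
    refine (gamma_ratio' hθα).congr (fun r => ?_)
    congr 2
    ring
  have h2 : Tendsto (fun r : ℝ => Real.Gamma (r+1) / Real.Gamma (r+θ+1) * r ^ θ)
      atTop (nhds 1) := by
    refine (gamma_ratio' hθ0).congr (fun r => ?_)
    congr 2
    ring
  have h3 : Tendsto (fun r : ℝ => r ^ (α-1)) atTop (nhds 0) := by
    have := tendsto_rpow_neg_atTop (by linarith : (0:ℝ) < 1 - α)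
    refine this.congr (fun r => ?_)
    congr 1
    ring
  have hL : Tendsto (fun r : ℝ =>
      Real.Gamma (r+1) / Real.Gamma (r+θ+α) * r ^ (θ+α-1)
        - Real.Gamma θ / Real.Gamma (θ+α-1)
          * (Real.Gamma (r+1) / Real.Gamma (r+θ+1) * r ^ θ * r ^ (α-1)))
      atTop (nhds 1) := by
    have := h1.sub (((h2.mul h3).const_mul (Real.Gamma θ / Real.Gamma (θ+α-1))))
    simpa using this
  refine hL.congr' ?_
  filter_upwards [eventually_gt_atTop (0:ℝ)] with r hr
  have hΓr1 : 0 < Real.Gamma (r+1) := Real.Gamma_pos_of_pos (by linarith)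
  have hΓra : 0 < Real.Gamma (r+θ+α) := Real.Gamma_pos_of_pos (by linarith)
  have hΓrt : 0 < Real.Gamma (r+θ+1) := Real.Gamma_pos_of_pos (by linarith)
  have hrp : 0 < r ^ (θ+α-1) := Real.rpow_pos_of_pos hr _
  have hpe : r ^ (1-θ-α) = (r ^ (θ+α-1))⁻¹ := by
    rw [← Real.rpow_neg hr.le]
    congr 1
    ring
  have hre : r ^ θ * r ^ (α-1) = r ^ (θ+α-1) := by
    rw [← Real.rpow_add hr]
    congr 1
    ring
  rw [tsum_eq ⟨hα0, hα1⟩ hθ hr, hpe, mul_assoc (Real.Gamma (r+1) / Real.Gamma (r+θ+1)), hre]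
  field_simp
end
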